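/- arXiv:2012.14592 — 4 statements merged into one kernel-verified Lean document; each statement's English description precedes it below -/
import Mathlib

section
/- Let T be an implementation (a Moore machine with inputs 2^I and outputs 2^O), φ a specification, and k ∈ ℕ. If for every environment E of size at most k the composed trace of T and E belongs to φ (i.e., T ⊨_E φ for all E with |E| ≤ k), then T is a k-lasso-precise implementation of φ (i.e., T ⊨_{k,I} φ). -/
/-- The ultimately periodic word `u · v^ω` induced by the lasso `(u, v)`. -/
def lassoWord {A : Type*} (u v : List A) (hv : v ≠ []) : ℕ → A :=
  fun n =>
    if h : n < u.length then u[n]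
    else v[(n - u.length) % v.length]'(Nat.mod_lt _ (List.length_pos_iff.mpr hv))

/-- An implementation: a Moore machine with inputs `2^I` and outputs `2^O`. -/
structure Impl (I O : Type*) where
  S : Type
  [instFin : Fintype S]
  t0 : S
  tr : S → (I → Bool) → S
  out : S → (O → Bool)

attribute [instance] Impl.instFin

/-- An environment: a Moore machine with inputs `2^O` and outputs `2^I`. -/
structure Env (I O : Type*) where
  S : Type
  [instFin : Fintype S]
  s0 : S
  rho : S → (O → Bool) → S
  inp : S → (I → Bool)

attribute [instance] Env.instFin

/-- The run of an implementation on an input sequence. -/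
def Impl.run {I O : Type*} (T : Impl I O) (ι : ℕ → I → Bool) : ℕ → T.S
  | 0 => T.t0
  | n + 1 => T.tr (T.run ι n) (ι n)

/-- The trace of an implementation on an input sequence. -/
def Impl.trace {I O : Type*} (T : Impl I O) (ι : ℕ → I → Bool) :
    ℕ → (I → Bool) × (O → Bool) :=
  fun n => (ι n, T.out (T.run ι n))

/-- The joint run of an implementation composed with an environment:
`t₀ = t0`, `s₀ = s0`, `t_{n+1} = τ(t_n, ι_E(s_n))`, `s_{n+1} = ρ(s_n, o(t_{n+1}))`. -/
def compRun {I O : Type*} (T : Impl I O) (E : Env I O) : ℕ → T.S × E.S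
  | 0 => (T.t0, E.s0)
  | n + 1 =>
    let p := compRun T E n
    let t' := T.tr p.1 (E.inp p.2)
    (t', E.rho p.2 (T.out t'))

/-- The composed trace of an implementation and an environment. -/
def compTrace {I O : Type*} (T : Impl I O) (E : Env I O) :
    ℕ → (I → Bool) × (O → Bool) :=
  fun n => (E.inp (compRun T E n).2, T.out (compRun T E n).1)

/-- `T ⊨_E φ`: the composed trace of `T` and `E` satisfies `φ`. -/
def SatEnv {I O : Type*} (T : Impl I O) (E : Env I O)
    (φ : Set (ℕ → (I → Bool) × (O → Bool))) : Prop :=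
  compTrace T E ∈ φ

/-- `T ⊨_{k,I} φ`: the trace of `T` on every input sequence representable
by a lasso of length `k` satisfies `φ`. -/
def LassoPrecise {I O : Type*} (T : Impl I O) (k : ℕ)
    (φ : Set (ℕ → (I → Bool) × (O → Bool))) : Prop :=
  ∀ ι : ℕ → I → Bool,
    (∃ (u v : List (I → Bool)) (hv : v ≠ []),
      u.length + v.length = k ∧ ι = lassoWord u v hv) →
    T.trace ι ∈ φ

/-!
A lasso `(u, v)` of length `k` is realised by an environment that ignores the implementation:
its states are the positions `0, …, k - 1` of `u ++ v`, it steps `i ↦ i + 1` and jumps from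
`k - 1` back to `|u|`, and in state `i` it emits `(u · v^ω)(i)`. Composed with `T`, it feeds `T`
exactly the input word `u · v^ω`, so its composed trace is the trace of `T` on that word.
-/

section Autonomous

variable {I O : Type*} {S : Type} [Fintype S]

def Env.autonomous (s₀ : S) (next : S → S) (inp : S → I → Bool) : Env I O where
  S := S
  s0 := s₀
  rho s _ := next s
  inp := inp

theorem compRun_autonomous (T : Impl I O) (s₀ : S) (next : S → S) (inp : S → I → Bool)
    (n : ℕ) :
    compRun T (Env.autonomous s₀ next inp) n =
      (T.run (fun m => inp (next^[m] s₀)) n, next^[n] s₀) := by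
  induction n with
  | zero => rfl
  | succ n ih =>
    rw [compRun, ih, Function.iterate_succ_apply']
    rfl

theorem compTrace_autonomous (T : Impl I O) (s₀ : S) (next : S → S) (inp : S → I → Bool) :
    compTrace T (Env.autonomous s₀ next inp) = T.trace (fun n => inp (next^[n] s₀)) := by
  funext n
  simp only [compTrace, Impl.trace, compRun_autonomous]
  rfl

end Autonomous

section Lasso

variable {A : Type*}

theorem lassoWord_add_length_right (u v : List A) (hv : v ≠ []) {n : ℕ} (hn : u.length ≤ n) :
    lassoWord u v hv (n + v.length) = lassoWord u v hv n := by
  have hshift : n + v.length - u.length = n - u.length + v.length := by omega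
  simp only [lassoWord, dif_neg (show ¬ n + v.length < u.length by omega),
    dif_neg (show ¬ n < u.length by omega), hshift, Nat.add_mod_right]

def lassoNext (u v : List A) (hv : v ≠ []) (i : Fin (u.length + v.length)) :
    Fin (u.length + v.length) :=
  if h : i.val + 1 < u.length + v.length then ⟨i.val + 1, h⟩
  else ⟨u.length, by have := List.length_pos_iff.mpr hv; omega⟩

theorem lassoWord_lassoNext_add (u v : List A) (hv : v ≠ []) (i : Fin (u.length + v.length))
    (j : ℕ) :
    lassoWord u v hv (lassoNext u v hv i + j) = lassoWord u v hv (i + 1 + j) := by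
  unfold lassoNext
  split_ifs with h
  · rfl
  · have hi : (i : ℕ) + 1 + j = u.length + j + v.length := by omega
    rw [hi, lassoWord_add_length_right u v hv (by omega)]

theorem lassoWord_iterate_lassoNext (u v : List A) (hv : v ≠ [])
    (i₀ : Fin (u.length + v.length)) (hi₀ : i₀.val = 0) (n : ℕ) :
    lassoWord u v hv ((lassoNext u v hv)^[n] i₀) = lassoWord u v hv n := by
  -- The jump back from position `|u| + |v|` to `|u|` shifts by the period, so the state and the
  -- time agree on the whole suffix, not just at one letter.
  suffices ∀ j, lassoWord u v hv ((lassoNext u v hv)^[n] i₀ + j) = lassoWord u v hv (n + j) by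
    simpa using this 0
  induction n with
  | zero => simp [hi₀]
  | succ n ih =>
    intro j
    rw [Function.iterate_succ_apply', lassoWord_lassoNext_add, add_assoc, ih, add_assoc]

end Lasso

def Env.lasso {I O : Type*} (u v : List (I → Bool)) (hv : v ≠ []) : Env I O :=
  Env.autonomous (⟨0, by have := List.length_pos_iff.mpr hv; omega⟩ : Fin (u.length + v.length))
    (lassoNext u v hv) (fun i => lassoWord u v hv i)

theorem compTrace_lasso {I O : Type*} (T : Impl I O) (u v : List (I → Bool)) (hv : v ≠ []) :
    compTrace T (Env.lasso u v hv) = T.trace (lassoWord u v hv) := by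
  rw [Env.lasso, compTrace_autonomous]
  congr 1
  funext n
  exact lassoWord_iterate_lassoNext u v hv _ rfl n

theorem stmt2 {I O : Type*} (T : Impl I O)
    (φ : Set (ℕ → (I → Bool) × (O → Bool))) (k : ℕ)
    (h : ∀ E : Env I O, Fintype.card E.S ≤ k → SatEnv T E φ) :
    LassoPrecise T k φ := by
  rintro ι ⟨u, v, hv, rfl, rfl⟩
  have hcard : Fintype.card (Env.lasso u v hv : Env I O).S = u.length + v.length :=
    Fintype.card_fin _
  rw [← compTrace_lasso]
  exact h _ hcard.le
end

section
/- Let T be an implementation (a Moore machine with inputs 2^I and outputs 2^O) with |T| states, φ a specification, and k ∈ ℕ. If T is a (k·|T|)-lasso-precise implementation of φ (i.e., T ⊨_{k·|T|,I} φ), then for every environment E of size at most k the composed trace of T and E belongs to φ (i.e., T ⊨_E φ). -/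
/-!
The joint run of `T` and `E` is the orbit of a deterministic step map on `T.S × E.S`, a set
of at most `k·|T|` states. By pigeonhole the orbit becomes periodic after `a` steps with some
period `b`, where `a + b = k·|T|`; hence so does the input sequence that `E` feeds to `T`, which
is therefore the word of a lasso of length `k·|T|`. On that input sequence the trace of `T` is the
composed trace.
-/

open Function

theorem exists_periodic_iterate_of_card_le {α : Type*} [Fintype α] (g : α → α) (x : α) {N : ℕ}
    (hN : Fintype.card α ≤ N) :
    ∃ a b, 0 < b ∧ a + b = N ∧ Periodic (fun m => g^[a + m] x) b := by
  obtain ⟨i, j, hne, hij⟩ := Fintype.exists_ne_map_eq_of_card_lt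
    (fun m : Fin (N + 1) => g^[m] x) (by simpa using Nat.lt_succ_of_le hN)
  wlog hlt : i < j generalizing i j
  · exact this j i hne.symm hij.symm (lt_of_le_of_ne (not_lt.mp hlt) hne.symm)
  have hper : IsPeriodicPt g (j - i) (g^[i] x) := by
    rw [IsPeriodicPt, IsFixedPt, ← iterate_add_apply, Nat.sub_add_cancel hlt.le]
    exact hij.symm
  refine ⟨N - (j - i), j - i, by omega, by omega, fun m => ?_⟩
  have := (hper.apply_iterate (N - (j - i) + m - i)).eq
  simp only [← iterate_add_apply] at this ⊢
  convert this using 2 <;> omega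

theorem exists_lassoWord_eq_of_periodic_shift {A : Type*} (σ : ℕ → A) {a b : ℕ} (hb : 0 < b)
    (hper : Periodic (fun m => σ (a + m)) b) :
    ∃ (u v : List A) (hv : v ≠ []), u.length + v.length = a + b ∧ σ = lassoWord u v hv := by
  refine ⟨(List.range a).map σ, (List.range b).map (fun m => σ (a + m)),
    by simp [Nat.pos_iff_ne_zero.mp hb], by simp, funext fun n => ?_⟩
  by_cases hn : n < a
  · simp [lassoWord, hn]
  · have := hper.map_mod_nat (n - a)
    simp [lassoWord, hn, this, Nat.add_sub_cancel' (not_lt.mp hn)]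

def compStep {I O : Type*} (T : Impl I O) (E : Env I O) (p : T.S × E.S) : T.S × E.S :=
  (T.tr p.1 (E.inp p.2), E.rho p.2 (T.out (T.tr p.1 (E.inp p.2))))

theorem compRun_eq_iterate {I O : Type*} (T : Impl I O) (E : Env I O) (n : ℕ) :
    compRun T E n = (compStep T E)^[n] (T.t0, E.s0) := by
  induction n with
  | zero => rfl
  | succ n ih => rw [iterate_succ_apply', ← ih]; rfl

theorem compTrace_eq_trace {I O : Type*} (T : Impl I O) (E : Env I O) :
    compTrace T E = T.trace (fun n => E.inp (compRun T E n).2) := by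
  have hrun : ∀ n, T.run (fun n => E.inp (compRun T E n).2) n = (compRun T E n).1 := by
    intro n
    induction n with
    | zero => rfl
    | succ n ih => rw [Impl.run, ih]; rfl
  funext n
  simp [compTrace, Impl.trace, hrun]

theorem stmt3 {I O : Type*} (T : Impl I O)
    (φ : Set (ℕ → (I → Bool) × (O → Bool))) (k : ℕ)
    (h : LassoPrecise T (k * Fintype.card T.S) φ) :
    ∀ E : Env I O, Fintype.card E.S ≤ k → SatEnv T E φ := by
  intro E hE
  have hcard : Fintype.card (T.S × E.S) ≤ k * Fintype.card T.S := by
    rw [Fintype.card_prod, mul_comm k]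
    exact Nat.mul_le_mul_left _ hE
  obtain ⟨a, b, hb, hab, hper⟩ :=
    exists_periodic_iterate_of_card_le (compStep T E) (T.t0, E.s0) hcard
  obtain ⟨u, v, hv, hlen, hι⟩ := exists_lassoWord_eq_of_periodic_shift
    (fun n => E.inp (compRun T E n).2) hb
    (by simp only [compRun_eq_iterate]; exact hper.comp fun p => E.inp p.2)
  rw [SatEnv, compTrace_eq_trace]
  exact h _ ⟨u, v, hv, hlen.trans hab, hι⟩
end

section
/- For every finite set AP of atomic propositions, every subset I ⊆ AP, and every bound k ∈ ℕ, there exists a deterministic finite automaton A_k over the alphabet Σ = 2^AP whose number of states is at most (2^|I| + 1)^k · (k+1)^k and whose accepted language is exactly the set of finite words over Σ that are prefixes of some infinite word whose I-projection is representable by a lasso of length k; that is, L(A_k) = {w ∈ Σ* | ∃ σ ∈ L_k^I(Σ^ω), w < σ}. -/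
/-- The projection of an infinite word over `2^AP` onto the propositions in `I`. -/
def projI {AP : Type*} (I : Set AP) (σ : ℕ → AP → Bool) : ℕ → (I → Bool) :=
  fun n i => σ n i

/-- The finite word `w` is a prefix of the infinite word `σ`. -/
def IsPrefixOf {A : Type*} (w : List A) (σ : ℕ → A) : Prop :=
  ∀ (i : ℕ) (h : i < w.length), w[i] = σ i

/-- `L_k^I(Σ^ω)`: infinite words over `2^AP` whose `I`-projection is representable
by a lasso of length `k` over `2^I`. -/
def LassoLangI {AP : Type*} (I : Set AP) (k : ℕ) : Set (ℕ → AP → Bool) :=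
  {σ | ∃ (u v : List (I → Bool)) (hv : v ≠ []),
    u.length + v.length = k ∧ projI I σ = lassoWord u v hv}

/-!
A finite word `x` is a prefix of a lasso word `u · v^ω` with `|u| = j` and `|u ++ v| = k` iff
`x[i] = x[lassoIndex j k i]` for all `i`, where `lassoIndex j k i` is the position of `u ++ v` from
which position `i` of the lasso word is read. Whether `x ++ [c]` still satisfies this for the loop
start `j` depends only on whether `x` does, on the first `k` letters of `x` and on the position
`lassoIndex j k |x|`. So the first `k` letters (each possibly absent) together with, for every
`j < k`, either that position or a failure mark, form a right-invariant summary of a word with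
`(2^|I| + 1)^k (k + 1)^k` values that decides membership, and such a summary is the state of a DFA.
-/

theorem DFA.exists_accepts_eq_preimage {α S : Type*} (f : List α → S)
    (hf : ∀ x y a, f x = f y → f (x ++ [a]) = f (y ++ [a])) (T : Set S) :
    ∃ M : DFA α S, M.accepts = f ⁻¹' T := by
  classical
  let M : DFA α S :=
    ⟨fun s a => if h : ∃ x, f x = s then f (h.choose ++ [a]) else s, f [], T⟩
  have eval_eq : ∀ x, M.eval x = f x := by
    intro x
    induction x using List.reverseRecOn with
    | nil => rfl
    | append_singleton x a ih =>
      have h : ∃ y, f y = f x := ⟨x, rfl⟩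
      rw [DFA.eval_append_singleton, ih]
      exact (dif_pos h).trans (hf _ _ a h.choose_spec)
  refine ⟨M, Set.ext fun x => ?_⟩
  change M.eval x ∈ T ↔ f x ∈ T
  rw [eval_eq]

def lassoIndex (j k n : ℕ) : ℕ := if n < j then n else j + (n - j) % (k - j)

section LassoIndex

variable {j k n : ℕ}

theorem lassoIndex_le : lassoIndex j k n ≤ n := by
  unfold lassoIndex
  split_ifs
  · rfl
  · have := Nat.mod_le (n - j) (k - j)
    omega

theorem lassoIndex_lt (hj : j < k) : lassoIndex j k n < k := by
  unfold lassoIndex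
  split_ifs
  · omega
  · have := Nat.mod_lt (n - j) (Nat.sub_pos_of_lt hj)
    omega

theorem lassoIndex_of_lt (hn : n < k) : lassoIndex j k n = n := by
  unfold lassoIndex
  split_ifs
  · rfl
  · rw [Nat.mod_eq_of_lt (by omega)]
    omega

theorem lassoIndex_lassoIndex (hj : j < k) : lassoIndex j k (lassoIndex j k n) = lassoIndex j k n :=
  lassoIndex_of_lt (lassoIndex_lt hj)

theorem lassoIndex_add_one : lassoIndex j k (n + 1) = lassoIndex j k (lassoIndex j k n + 1) := by
  unfold lassoIndex
  by_cases hn : n < j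
  · simp only [hn, if_true]
  · simp only [hn, if_false, show ¬n + 1 < j by omega,
      show ¬j + (n - j) % (k - j) + 1 < j by omega]
    rw [show n + 1 - j = n - j + 1 by omega,
      show j + (n - j) % (k - j) + 1 - j = (n - j) % (k - j) + 1 by omega, Nat.mod_add_mod]

end LassoIndex

section Lasso

variable {C : Type*}

theorem getElem?_append_lassoIndex (u v : List C) (hv : v ≠ []) (n : ℕ) :
    (u ++ v)[lassoIndex u.length (u.length + v.length) n]? = some (lassoWord u v hv n) := by
  unfold lassoIndex lassoWord
  split_ifs with hn
  · rw [List.getElem?_append_left hn, List.getElem?_eq_getElem hn]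
  · rw [List.getElem?_append_right (by omega), Nat.add_sub_cancel_left, Nat.add_sub_cancel_left,
      List.getElem?_eq_getElem]

theorem lassoWord_lassoIndex (u v : List C) (hv : v ≠ []) (n : ℕ) :
    lassoWord u v hv (lassoIndex u.length (u.length + v.length) n) = lassoWord u v hv n := by
  have hlt : u.length < u.length + v.length := by simp [List.length_pos_iff.mpr hv]
  apply Option.some_injective
  rw [← getElem?_append_lassoIndex, ← getElem?_append_lassoIndex, lassoIndex_lassoIndex hlt]

theorem isPrefixOf_iff_getElem? {w : List C} {σ : ℕ → C} :
    IsPrefixOf w σ ↔ ∀ i < w.length, w[i]? = some (σ i) := by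
  refine forall₂_congr fun i hi => ?_
  rw [List.getElem?_eq_getElem hi, Option.some_inj]

theorem isPrefixOf_map_iff {A : Type*} {p : A → C} (hp : Function.Surjective p) {w : List A}
    {τ : ℕ → C} : IsPrefixOf (w.map p) τ ↔ ∃ σ, p ∘ σ = τ ∧ IsPrefixOf w σ := by
  constructor
  · intro hw
    refine ⟨fun n => if h : n < w.length then w[n] else Function.surjInv hp (τ n), ?_, ?_⟩
    · funext n
      by_cases h : n < w.length
      · simpa [h] using hw n (by simpa using h)
      · simp [h, Function.surjInv_eq hp]
    · intro i hi
      simp [hi]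
  · rintro ⟨σ, rfl, hσ⟩ i hi
    simp [hσ i (by simpa using hi)]

def FitsLasso (x : List C) (j k : ℕ) : Prop :=
  ∀ i < x.length, x[lassoIndex j k i]? = x[i]?

theorem exists_lassoWord_isPrefixOf_iff [Inhabited C] {k : ℕ} {x : List C} :
    (∃ (u v : List C) (hv : v ≠ []),
        u.length + v.length = k ∧ IsPrefixOf x (lassoWord u v hv)) ↔
      ∃ j : Fin k, FitsLasso x j k := by
  constructor
  · rintro ⟨u, v, hv, rfl, hx⟩
    rw [isPrefixOf_iff_getElem?] at hx
    refine ⟨⟨u.length, by simp [List.length_pos_iff.mpr hv]⟩, fun i hi => ?_⟩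
    rw [hx i hi, hx _ (lassoIndex_le.trans_lt hi), lassoWord_lassoIndex]
  · rintro ⟨j, hx⟩
    let g (i : ℕ) : C := x.getD i default
    let u := (List.range j).map g
    let v := (List.range (k - j)).map fun t => g (j + t)
    have hu : u.length = j := by simp [u]
    have hv : v ≠ [] := by simp only [v, ne_eq, List.map_eq_nil_iff, List.range_eq_nil]; omega
    have huv : u ++ v = (List.range k).map g := by
      rw [← Nat.add_sub_cancel' j.2.le, List.range_add, List.map_append, List.map_map]
      rfl
    have hk : u.length + v.length = k := by rw [← List.length_append, huv]; simp
    refine ⟨u, v, hv, hk, isPrefixOf_iff_getElem?.mpr fun i hi => ?_⟩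
    have hidx := lassoIndex_le (j := j) (k := k) (n := i)
    rw [← getElem?_append_lassoIndex, huv, hk, hu, List.getElem?_map,
      List.getElem?_range (lassoIndex_lt j.2), ← hx i hi, List.getElem?_eq_getElem (by omega)]
    simp [g, List.getD_eq_getElem?_getD,
      List.getElem?_eq_getElem (show lassoIndex j k i < x.length by omega)]

theorem fitsLasso_append_singleton {x : List C} {c : C} {j k : ℕ} :
    FitsLasso (x ++ [c]) j k ↔
      FitsLasso x j k ∧ (x ++ [c])[lassoIndex j k x.length]? = some c := by
  unfold FitsLasso
  rw [List.length_append, List.length_singleton, Nat.forall_lt_succ_right,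
    List.getElem?_concat_length]
  refine and_congr_left' (forall₂_congr fun i hi => ?_)
  rw [List.getElem?_append_left hi, List.getElem?_append_left (lassoIndex_le.trans_lt hi)]

open Classical in
noncomputable def lassoPointer (k : ℕ) (x : List C) (j : Fin k) : Option (Fin k) :=
  if FitsLasso x j k then some ⟨lassoIndex j k x.length, lassoIndex_lt j.2⟩ else none

open Classical in
theorem lassoPointer_append_singleton {k : ℕ} (x : List C) (c : C) (j : Fin k) :
    lassoPointer k (x ++ [c]) j = (lassoPointer k x j).bind fun s =>
      if (x ++ [c])[(s : ℕ)]? = some c then some ⟨lassoIndex j k (s + 1), lassoIndex_lt j.2⟩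
      else none := by
  unfold lassoPointer
  by_cases h : FitsLasso x j k
  · simp only [fitsLasso_append_singleton, h, true_and, if_true, Option.bind_some,
      List.length_append, List.length_singleton, lassoIndex_add_one (n := x.length)]
  · simp [fitsLasso_append_singleton, h]

noncomputable def lassoState (k : ℕ) (x : List C) :
    (Fin k → Option C) × (Fin k → Option (Fin k)) :=
  (fun i => x[(i : ℕ)]?, lassoPointer k x)

theorem eq_of_lassoState_eq {k : ℕ} {x y : List C} (h : lassoState k x = lassoState k y)
    (hx : x.length < k) : x = y := by
  have hbuf (i : ℕ) (hi : i < k) : x[i]? = y[i]? := congrFun (congrArg Prod.fst h) ⟨i, hi⟩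
  have hy : y.length ≤ x.length := by
    by_contra! hlt
    have := hbuf x.length hx
    rw [List.getElem?_eq_none le_rfl, List.getElem?_eq_getElem hlt] at this
    exact Option.some_ne_none _ this.symm
  refine List.ext_getElem? fun i => ?_
  by_cases hi : i < k
  · exact hbuf i hi
  · rw [List.getElem?_eq_none (by omega), List.getElem?_eq_none (by omega)]

theorem lassoState_append_singleton {k : ℕ} (x y : List C) (c : C)
    (h : lassoState k x = lassoState k y) :
    lassoState k (x ++ [c]) = lassoState k (y ++ [c]) := by
  by_cases hx : x.length < k
  · rw [eq_of_lassoState_eq h hx]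
  by_cases hy : y.length < k
  · rw [eq_of_lassoState_eq h.symm hy]
  have hbuf (i : Fin k) : (x ++ [c])[(i : ℕ)]? = (y ++ [c])[(i : ℕ)]? := by
    rw [List.getElem?_append_left (by omega), List.getElem?_append_left (by omega)]
    exact congrFun (congrArg Prod.fst h) i
  have hptr : lassoPointer k x = lassoPointer k y := congrArg Prod.snd h
  refine Prod.ext (funext hbuf) (funext fun j => ?_)
  change lassoPointer k (x ++ [c]) j = lassoPointer k (y ++ [c]) j
  rw [lassoPointer_append_singleton, lassoPointer_append_singleton, hptr]
  congr 1
  funext s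
  rw [hbuf s]

theorem setOf_exists_lassoWord_isPrefixOf_eq_preimage [Inhabited C] (k : ℕ) :
    {x : List C | ∃ (u v : List C) (hv : v ≠ []),
      u.length + v.length = k ∧ IsPrefixOf x (lassoWord u v hv)} =
      lassoState k ⁻¹' {s | ∃ j, s.2 j ≠ none} := by
  ext x
  exact exists_lassoWord_isPrefixOf_iff.trans (by simp [lassoState, lassoPointer])

end Lasso

theorem setOf_exists_lassoLangI_isPrefixOf {AP : Type*} (I : Set AP) (k : ℕ) :
    {w : List (AP → Bool) | ∃ σ ∈ LassoLangI I k, IsPrefixOf w σ} =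
      List.map (fun a (i : I) => a i) ⁻¹' {x | ∃ (u v : List (I → Bool)) (hv : v ≠ []),
        u.length + v.length = k ∧ IsPrefixOf x (lassoWord u v hv)} := by
  ext w
  have hp : Function.Surjective fun (a : AP → Bool) (i : I) => a i :=
    Subtype.val_injective.surjective_comp_right
  simp only [Set.mem_ofPred_eq, Set.mem_preimage, isPrefixOf_map_iff hp]
  constructor
  · rintro ⟨σ, ⟨u, v, hv, hk, hσ⟩, hw⟩
    exact ⟨u, v, hv, hk, σ, hσ, hw⟩
  · rintro ⟨u, v, hv, hk, σ, hσ, hw⟩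
    exact ⟨σ, ⟨u, v, hv, hk, hσ⟩, hw⟩

theorem stmt4 {AP : Type*} [Fintype AP] (I : Set AP) [DecidablePred (· ∈ I)]
    (k : ℕ) :
    ∃ (Q : Type) (_ : Fintype Q) (Ak : DFA (AP → Bool) Q),
      Fintype.card Q ≤ (2 ^ Fintype.card I + 1) ^ k * (k + 1) ^ k ∧
      Ak.accepts = {w : List (AP → Bool) | ∃ σ ∈ LassoLangI I k, IsPrefixOf w σ} := by
  classical
  obtain ⟨M, hM⟩ := DFA.exists_accepts_eq_preimage (lassoState (C := I → Bool) k)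
    lassoState_append_singleton {s | ∃ j, s.2 j ≠ none}
  refine ⟨Fin (Fintype.card ((Fin k → Option (I → Bool)) × (Fin k → Option (Fin k)))),
    inferInstance, (M.comap fun (a : AP → Bool) (i : I) => a i).reindex (Fintype.equivFin _),
    ?_, ?_⟩
  · simp
  · rw [DFA.accepts_reindex, DFA.accepts_comap, hM, setOf_exists_lassoLangI_isPrefixOf,
      setOf_exists_lassoWord_isPrefixOf_eq_preimage]
end

section
/- For every bound k ≥ 1, every finite set AP of atomic propositions, and every nonempty subset I ⊆ AP, every nondeterministic finite automaton N over the alphabet Σ = 2^AP whose accepted language is L = {w ∈ Σ* | ∃ σ ∈ L_k^I(Σ^ω), w < σ} has at least 2^(k−1) states. -/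
open Function

section Periodicity

variable {α : Type*}

def HasLeastPeriod (f : ℕ → α) (k : ℕ) : Prop :=
  Periodic f k ∧ ∀ p, 0 < p → p < k → ¬ Periodic f p

def periodicExt {k : ℕ} [NeZero k] (w : Fin k → α) : ℕ → α :=
  fun n => w ⟨n % k, Nat.mod_lt n (NeZero.pos k)⟩

theorem periodic_periodicExt {k : ℕ} [NeZero k] (w : Fin k → α) : Periodic (periodicExt w) k :=
  fun n => by simp [periodicExt]

theorem periodicExt_of_lt {k : ℕ} [NeZero k] (w : Fin k → α) {n : ℕ} (hn : n < k) :
    periodicExt w n = w ⟨n, hn⟩ := by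
  simp [periodicExt, Nat.mod_eq_of_lt hn]

theorem Function.Periodic.of_forall_lt {f : ℕ → α} {k p : ℕ} (hf : Periodic f k) (hk : 0 < k)
    (hw : ∀ n < k, f (n + p) = f n) : Periodic f p := fun n => by
  rw [← hf.map_mod_nat n, ← hw _ (Nat.mod_lt n hk), ← hf.map_mod_nat (n % k + p), Nat.mod_add_mod,
    hf.map_mod_nat]

theorem Function.Periodic.apply_eq_of_eq_off_modEq {F G : ℕ → α} {k m d e : ℕ}
    (hF : Periodic F d) (hG : Periodic G e) (hd : 0 < d) (hdk : d < k) (he : 0 < e) (hek : e < k)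
    (hFG : ∀ n, ¬ n ≡ m [MOD k] → F n = G n) : F m = G m := by
  have hkd : ¬ k ∣ d := Nat.not_dvd_of_pos_of_lt hd hdk
  suffices hme : F (m + e) = F m by
    rw [← hme, hFG _ fun h => Nat.not_dvd_of_pos_of_lt he hek (Nat.add_modEq_left_iff.mp h), hG]
  by_contra hne
  -- Off the class of `m` mod `k`, `F` is `e`-periodic like `G`. As `F (n + e) ≠ F n` holds at
  -- every translate `n = m + t d`, one of `n`, `n + e` must lie in the class of `m`.
  have hclass : ∀ t : ℕ, ¬ k ∣ t * d → k ∣ t * d + e := by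
    intro t ht
    by_contra hte
    have h1 : ¬ m + t * d ≡ m [MOD k] := fun h => ht (Nat.add_modEq_left_iff.mp h)
    have h2 : ¬ m + t * d + e ≡ m [MOD k] := fun h =>
      hte (Nat.add_modEq_left_iff.mp (by rwa [add_assoc] at h))
    have hFt : ∀ x, F (x + t * d) = F x := by simpa using hF.nat_mul t
    apply hne
    rw [← hFt m, ← hFt (m + e), add_right_comm, hFG _ h1, hFG _ h2, hG]
  have hde : d + e = k :=
    Nat.eq_of_dvd_of_lt_two_mul (by omega) (by simpa using hclass 1 (by simpa using hkd))
      (by omega)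
  by_cases h2d : k ∣ 2 * d
  · have : 2 * d = k := Nat.eq_of_dvd_of_lt_two_mul (by omega) h2d (by omega)
    obtain rfl : e = d := by omega
    exact hne (hF m)
  · have h := hclass 2 h2d
    rw [show 2 * d + e = d + k by omega, Nat.dvd_add_left (dvd_refl k)] at h
    exact hkd h

theorem exists_hasLeastPeriod_periodicExt_snoc {m : ℕ} (g : Fin m → Bool) :
    ∃ b, HasLeastPeriod (periodicExt (Fin.snoc g b : Fin (m + 1) → Bool)) (m + 1) := by
  have hlast : ∀ b, periodicExt (Fin.snoc g b : Fin (m + 1) → Bool) m = b := fun b => by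
    rw [periodicExt_of_lt _ (lt_add_one m)]
    exact Fin.snoc_last (α := fun _ => Bool) b g
  have hagree : ∀ n, ¬ n ≡ m [MOD m + 1] →
      periodicExt (Fin.snoc g false : Fin (m + 1) → Bool) n =
        periodicExt (Fin.snoc g true : Fin (m + 1) → Bool) n := by
    intro n hn
    obtain ⟨j, hj⟩ : ∃ j : Fin m, j.castSucc = ⟨n % (m + 1), Nat.mod_lt n m.succ_pos⟩ := by
      refine Fin.exists_castSucc_eq.mpr fun h => hn ?_
      rw [Nat.ModEq, Nat.mod_eq_of_lt (lt_add_one m)]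
      exact congrArg Fin.val h
    simp only [periodicExt, ← hj, Fin.snoc_castSucc]
  by_contra! h
  have hshort : ∀ b, ∃ p, 0 < p ∧ p < m + 1 ∧
      Periodic (periodicExt (Fin.snoc g b : Fin (m + 1) → Bool)) p := fun b => by
    have hb := h b
    unfold HasLeastPeriod at hb
    push Not at hb
    exact hb (periodic_periodicExt _)
  obtain ⟨p, hp, hpk, hFp⟩ := hshort false
  obtain ⟨q, hq, hqk, hFq⟩ := hshort true
  simpa [hlast] using hFp.apply_eq_of_eq_off_modEq hFq hp hpk hq hqk hagree

end Periodicity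

theorem two_pow_le_card_hasLeastPeriod (m : ℕ) :
    2 ^ m ≤ Nat.card {w : Fin (m + 1) → Bool // HasLeastPeriod (periodicExt w) (m + 1)} := by
  choose b hb using fun g : Fin m → Bool => exists_hasLeastPeriod_periodicExt_snoc g
  calc 2 ^ m = Nat.card (Fin m → Bool) := by simp
    _ ≤ _ := Nat.card_le_card_of_injective (fun g => ⟨Fin.snoc g (b g), hb g⟩) fun g h hgh =>
      (Fin.snoc_injective2 (α := fun _ => Bool) (congrArg Subtype.val hgh)).1

theorem eq_of_eventually_periodic_of_hasLeastPeriod {α : Type*} {f F G : ℕ → α} {j p k : ℕ}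
    (hp : 0 < p) (hjpk : j + p = k) (hf : ∀ n, j ≤ n → f (n + p) = f n)
    (hfF : ∀ n < k, f n = F n) (hfG : ∀ n, k ≤ n → n < 3 * k → f n = G n)
    (hG : HasLeastPeriod G k) : ∀ n < k, F n = G n := by
  have hGp : Periodic G p := hG.1.of_forall_lt (by omega) fun n hn => by
    rw [← hG.1 n, ← hG.1 (n + p), ← hfG _ (by omega) (by omega), ← hfG _ (by omega) (by omega),
      add_right_comm, hf _ (by omega)]
  obtain rfl : p = k := by
    by_contra hpk
    exact hG.2 p hp (by omega) hGp
  intro n hn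
  rw [← hfF n hn, ← hf n (by omega), hfG _ (by omega) (by omega), hG.1]

theorem lassoWord_add_length {A : Type*} (u v : List A) (hv : v ≠ []) {n : ℕ}
    (hn : u.length ≤ n) : lassoWord u v hv (n + v.length) = lassoWord u v hv n := by
  have hidx : (n + v.length - u.length) % v.length = (n - u.length) % v.length := by
    rw [Nat.sub_add_comm hn, Nat.add_mod_right]
  simp only [lassoWord, dif_neg (not_lt.mpr hn),
    dif_neg (not_lt.mpr (hn.trans (Nat.le_add_right _ _)))]
  exact getElem_congr_idx hidx

theorem exists_eventually_periodic_of_mem_lassoLangI {AP : Type*} {I : Set AP} {k : ℕ}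
    {σ : ℕ → AP → Bool} (hσ : σ ∈ LassoLangI I k) {i : AP} (hi : i ∈ I) :
    ∃ j p, 0 < p ∧ j + p = k ∧ ∀ n, j ≤ n → σ (n + p) i = σ n i := by
  obtain ⟨u, v, hv, hlen, hproj⟩ := hσ
  refine ⟨u.length, v.length, List.length_pos_iff.mpr hv, hlen, fun n hn => ?_⟩
  have hσi : ∀ n, σ n i = lassoWord u v hv n ⟨i, hi⟩ := fun n => congrFun (congrFun hproj n) ⟨i, hi⟩
  rw [hσi, hσi, lassoWord_add_length u v hv hn]

theorem periodicExt_mem_lassoLangI {AP : Type*} (I : Set AP) {k : ℕ} [NeZero k]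
    (w : Fin k → AP → Bool) : periodicExt w ∈ LassoLangI I k := by
  refine ⟨[], List.ofFn fun j i => w j i, by simp [NeZero.ne k], by simp, ?_⟩
  funext n i
  simp [projI, lassoWord, periodicExt]

theorem isPrefixOf_take {A : Type*} (n : ℕ) (σ : ℕ → A) : IsPrefixOf (Stream'.take n σ) σ :=
  fun _ _ => Stream'.take_get ..

theorem IsPrefixOf.take_append_take_drop {A : Type*} {s t : Stream' A} {σ : ℕ → A} {a b : ℕ}
    (h : IsPrefixOf (s.take a ++ (t.drop a).take b) σ) :
    (∀ n < a, σ n = s n) ∧ ∀ n, a ≤ n → n < a + b → σ n = t n := by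
  refine ⟨fun n hn => ?_, fun n hn hnb => ?_⟩
  · rw [← h n (by simp; omega), List.getElem_append_left (by simpa using hn)]
    exact Stream'.take_get ..
  · rw [← h n (by simp; omega), List.getElem_append_right (by simpa using hn)]
    simp only [Stream'.take_get, Stream'.get_drop, Stream'.length_take, Nat.add_sub_cancel' hn]
    rfl

theorem NFA.card_le_of_foolingSet {α σ ι : Type*} [Finite σ] (M : NFA α σ) (x y : ι → List α)
    (hmem : ∀ i, x i ++ y i ∈ M.accepts) (hfool : ∀ i j, x i ++ y j ∈ M.accepts → i = j) :
    Nat.card ι ≤ Nat.card σ := by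
  have hsplit : ∀ {u v : List α}, u ++ v ∈ M.accepts ↔ ∃ q ∈ M.eval u, v ∈ M.acceptsFrom {q} := by
    intro u v
    rw [NFA.accepts_eq_acceptsFrom_start, NFA.append_mem_acceptsFrom]
    constructor
    · rintro ⟨s, hs, hsu⟩
      obtain ⟨q, hq, hqs⟩ := NFA.mem_evalFrom_iff_exists.mp hsu
      exact ⟨q, hq, s, hs, hqs⟩
    · rintro ⟨q, hq, s, hs, hqs⟩
      exact ⟨s, hs, NFA.mem_evalFrom_iff_exists.mpr ⟨q, hq, hqs⟩⟩
  choose q hq hacc using fun i => hsplit.mp (hmem i)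
  exact Nat.card_le_card_of_injective q fun i j hij =>
    hfool i j (hsplit.mpr ⟨q j, hij ▸ hq i, hacc j⟩)

theorem eq_of_isPrefixOf_mem_lassoLangI {AP : Type*} {I : Set AP} (hI : I.Nonempty) {k : ℕ}
    [NeZero k] {w w' : Fin k → Bool} (hw' : HasLeastPeriod (periodicExt w') k)
    {σ : ℕ → AP → Bool} (hσ : σ ∈ LassoLangI I k)
    (hpre : IsPrefixOf (Stream'.take k (periodicExt fun j (_ : AP) => w j) ++
      Stream'.take (2 * k) (Stream'.drop k (periodicExt fun j (_ : AP) => w' j))) σ) :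
    w = w' := by
  obtain ⟨i, hi⟩ := hI
  obtain ⟨j, p, hp, hjpk, hper⟩ := exists_eventually_periodic_of_mem_lassoLangI hσ hi
  obtain ⟨hpre_w, hpre_w'⟩ := hpre.take_append_take_drop
  funext l
  rw [← periodicExt_of_lt w l.2, ← periodicExt_of_lt w' l.2]
  exact eq_of_eventually_periodic_of_hasLeastPeriod hp hjpk hper
    (fun n hn => congrFun (hpre_w n hn) i) (fun n h1 h2 => congrFun (hpre_w' n h1 (by omega)) i)
    hw' l l.2

theorem stmt5_general {AP : Type*} (I : Set AP)
    (hI : I.Nonempty) (k : ℕ) (hk : 1 ≤ k)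
    (Q : Type*) [Fintype Q] (N : NFA (AP → Bool) Q)
    (hN : N.accepts = {w : List (AP → Bool) | ∃ σ ∈ LassoLangI I k, IsPrefixOf w σ}) :
    2 ^ (k - 1) ≤ Fintype.card Q := by
  obtain ⟨m, rfl⟩ := Nat.exists_eq_add_of_le' hk
  let word (w : Fin (m + 1) → Bool) : Stream' (AP → Bool) := periodicExt fun j _ => w j
  have hfool := N.card_le_of_foolingSet
    (ι := {w : Fin (m + 1) → Bool // HasLeastPeriod (periodicExt w) (m + 1)})
    (fun w => (word w).take (m + 1)) (fun w => ((word w).drop (m + 1)).take (2 * (m + 1)))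
    (fun w => by
      rw [hN, ← Stream'.take_add]
      exact ⟨_, periodicExt_mem_lassoLangI I _, isPrefixOf_take _ _⟩)
    (fun w w' h => by
      obtain ⟨σ, hσ, hpre⟩ := hN ▸ h
      exact Subtype.ext (eq_of_isPrefixOf_mem_lassoLangI hI w'.2 hσ hpre))
  rw [← Nat.card_eq_fintype_card, Nat.add_sub_cancel]
  exact (two_pow_le_card_hasLeastPeriod m).trans hfool

theorem stmt5 {AP : Type*} [Fintype AP] (I : Set AP) [DecidablePred (· ∈ I)]
    (hI : I.Nonempty) (k : ℕ) (hk : 1 ≤ k)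
    (Q : Type*) [Fintype Q] (N : NFA (AP → Bool) Q)
    (hN : N.accepts = {w : List (AP → Bool) | ∃ σ ∈ LassoLangI I k, IsPrefixOf w σ}) :
    2 ^ (k - 1) ≤ Fintype.card Q :=
  stmt5_general I hI k hk Q N hN
end
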